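/- Let n be a positive integer, Δt, Δx > 0, and let L² ∈ ℝ^{n×n} be the circulant matrix with entries (indices modulo n) L²_{j,j±1} = ±Δt/(2Δx) and all other entries zero. Let A ∈ ℝ^{m×m} be symmetric with c = λ_max(A)·Δt/Δx. Then for every u ∈ ℝ^{n×m}: ‖u + L² u Aᵀ‖_F² = ‖u‖_F² + ‖L² u Aᵀ‖_F² ≤ (1 + c² · max over α ∈ {1,…,n} of sin²(2πα/n)) · ‖u‖_F². -/

import Mathlib

/-! The cross term `∑ u * (L² u Aᵀ) = tr (uᵀ L² u Aᵀ)` is equal to minus itself after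
transposition, because `L²` is antisymmetric and `A` symmetric; this gives the Pythagorean
identity. For the bound, the rows of `u Aᵀ` are the images of the rows of `u` under `A`, which
costs `λ_max(A)²`, and the columns of `L² w` are central differences `Δt/(2Δx) (w_{j+1} - w_{j-1})`.
The Fourier transform over the characters `ψ` of `Fin n` turns the central difference into
multiplication by `ψ (-1) - ψ 1 = -2i Im (ψ 1)`, where `ψ 1 = exp (2πik/n)`, so Parseval bounds it
by `4 max_k sin² (2πk/n)`. -/

open Matrix
open scoped Real

noncomputable def L1 (n : ℕ) [NeZero n] : Matrix (Fin n) (Fin n) ℝ :=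
  Matrix.of fun j k => (if k = j + 1 then (1 / 2 : ℝ) else 0) + (if k = j - 1 then (1 / 2 : ℝ) else 0)

noncomputable def L2 (n : ℕ) [NeZero n] (Δt Δx : ℝ) : Matrix (Fin n) (Fin n) ℝ :=
  Matrix.of fun j k =>
    (if k = j + 1 then Δt / (2 * Δx) else 0) + (if k = j - 1 then -(Δt / (2 * Δx)) else 0)

noncomputable def frob {n m : ℕ} (M : Matrix (Fin n) (Fin m) ℝ) : ℝ :=
  Real.sqrt (∑ i, ∑ j, (M i j) ^ 2)

/- For symmetric `A` this operator norm is the paper's `λ_max(A)`. -/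
noncomputable def specNorm {m : ℕ} (A : Matrix (Fin m) (Fin m) ℝ) : ℝ :=
  ‖Matrix.toEuclideanCLM (𝕜 := ℝ) A‖

open Finset

namespace AddChar

variable {G : Type*} [AddCommGroup G] [Fintype G]

theorem sum_normSq_sum_mul_apply [DecidableEq G] (f : G → ℂ) :
    ∑ ψ : AddChar G ℂ, Complex.normSq (∑ x, f x * ψ x)
      = Fintype.card G * ∑ x, Complex.normSq (f x) := by
  apply Complex.ofReal_injective
  push_cast
  simp only [← Complex.mul_conj, map_sum, map_mul, ← map_neg_eq_conj, sum_mul_sum]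
  calc ∑ ψ : AddChar G ℂ, ∑ x, ∑ y, f x * ψ x * (starRingEnd ℂ (f y) * ψ (-y))
      = ∑ x, ∑ y, f x * starRingEnd ℂ (f y) * ∑ ψ : AddChar G ℂ, ψ (x - y) := by
        rw [sum_comm]
        refine sum_congr rfl fun x _ => ?_
        rw [sum_comm]
        refine sum_congr rfl fun y _ => ?_
        rw [mul_sum]
        refine sum_congr rfl fun ψ _ => ?_
        rw [sub_eq_add_neg, map_add_eq_mul]
        ring
    _ = _ := by
        simp only [sum_apply_eq_ite, sub_eq_zero, mul_ite, mul_zero, sum_ite_eq, mem_univ,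
          if_true, mul_sum]
        exact sum_congr rfl fun x _ => by ring

theorem sum_comp_add_mul_apply (f : G → ℂ) (ψ : AddChar G ℂ) (a : G) :
    ∑ x, f (x + a) * ψ x = ψ (-a) * ∑ x, f x * ψ x := by
  rw [mul_sum]
  refine Fintype.sum_equiv (Equiv.addRight a) _ _ fun x => ?_
  rw [Equiv.coe_addRight, mul_left_comm, ← map_add_eq_mul]
  simp only [neg_add_cancel_comm_assoc]

theorem normSq_apply_neg_sub_apply (ψ : AddChar G ℂ) (a : G) :
    Complex.normSq (ψ (-a) - ψ a) = 4 * (ψ a).im ^ 2 := by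
  rw [map_neg_eq_conj, ← neg_sub, Complex.normSq_neg, Complex.sub_conj, Complex.normSq_mul,
    Complex.normSq_ofReal, Complex.normSq_I]
  ring

theorem sum_normSq_sub_le (f : G → ℂ) (a : G) {M : ℝ}
    (hM : ∀ ψ : AddChar G ℂ, (ψ a).im ^ 2 ≤ M) :
    ∑ x, Complex.normSq (f (x + a) - f (x - a)) ≤ 4 * M * ∑ x, Complex.normSq (f x) := by
  classical
  have hdiff : ∀ ψ : AddChar G ℂ, ∑ x, (f (x + a) - f (x - a)) * ψ x
      = (ψ (-a) - ψ a) * ∑ x, f x * ψ x := fun ψ => by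
    have hminus := sum_comp_add_mul_apply f ψ (-a)
    simp only [← sub_eq_add_neg, neg_neg] at hminus
    simp only [sub_mul, sum_sub_distrib, sum_comp_add_mul_apply, hminus]
  have hcard : (0 : ℝ) < Fintype.card G := by exact_mod_cast Fintype.card_pos
  refine le_of_mul_le_mul_left ?_ hcard
  rw [← sum_normSq_sum_mul_apply, mul_left_comm, ← sum_normSq_sum_mul_apply, mul_sum]
  refine sum_le_sum fun ψ _ => ?_
  rw [hdiff, Complex.normSq_mul, normSq_apply_neg_sub_apply]
  exact mul_le_mul_of_nonneg_right (by linarith [hM ψ]) (Complex.normSq_nonneg _)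

theorem exists_im_apply_eq_sin (ψ : AddChar G ℂ) (a : G) :
    ∃ k < Fintype.card G, (ψ a).im = Real.sin (2 * π * k / Fintype.card G) := by
  have hpow : ψ a ^ Fintype.card G = 1 := by
    rw [← map_nsmul_eq_pow, card_nsmul_eq_zero, map_zero_eq_one]
  obtain ⟨k, hk, hψ⟩ :=
    (Complex.isPrimitiveRoot_exp _ Fintype.card_ne_zero).eq_pow_of_pow_eq_one hpow
  refine ⟨k, hk, ?_⟩
  rw [← hψ, ← Complex.exp_nat_mul, ← Complex.exp_ofReal_mul_I_im]
  congr 2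
  push_cast
  ring

end AddChar

noncomputable def maxSinSq (n : ℕ) [NeZero n] : ℝ :=
  (Icc 1 n).sup' (nonempty_Icc.mpr (Nat.one_le_iff_ne_zero.mpr (NeZero.ne n)))
    (fun α : ℕ => Real.sin (2 * π * α / n) ^ 2)

theorem sin_sq_le_maxSinSq (n : ℕ) [NeZero n] {k : ℕ} (hk : k ≤ n) :
    Real.sin (2 * π * k / n) ^ 2 ≤ maxSinSq n := by
  have hn : 1 ≤ n := Nat.one_le_iff_ne_zero.mpr (NeZero.ne n)
  rcases Nat.eq_zero_or_pos k with rfl | hk0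
  -- `k = 0` is covered by `α = n`, where the sine vanishes as well
  · exact le_sup'_of_le _ (mem_Icc.mpr ⟨hn, le_rfl⟩) (by simp)
  · exact le_sup' (fun α : ℕ => Real.sin (2 * π * α / n) ^ 2) (mem_Icc.mpr ⟨hk0, hk⟩)

theorem maxSinSq_nonneg (n : ℕ) [NeZero n] : 0 ≤ maxSinSq n :=
  (sq_nonneg _).trans (sin_sq_le_maxSinSq n (Nat.zero_le n))

theorem sum_sq_sub_le_maxSinSq (n : ℕ) [NeZero n] (v : Fin n → ℝ) :
    ∑ j, (v (j + 1) - v (j - 1)) ^ 2 ≤ 4 * maxSinSq n * ∑ j, v j ^ 2 := by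
  have hM : ∀ ψ : AddChar (Fin n) ℂ, (ψ 1).im ^ 2 ≤ maxSinSq n := fun ψ => by
    obtain ⟨k, hk, hψ⟩ := ψ.exists_im_apply_eq_sin 1
    rw [Fintype.card_fin] at hk hψ
    exact hψ ▸ sin_sq_le_maxSinSq n hk.le
  have := AddChar.sum_normSq_sub_le (fun j => (v j : ℂ)) 1 hM
  simpa [← Complex.ofReal_sub, Complex.normSq_ofReal, ← sq] using this

theorem frob_sq {n m : ℕ} (M : Matrix (Fin n) (Fin m) ℝ) : frob M ^ 2 = ∑ i, ∑ j, M i j ^ 2 :=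
  Real.sq_sqrt (sum_nonneg fun _ _ => sum_nonneg fun _ _ => sq_nonneg _)

theorem frob_add_sq {n m : ℕ} (u w : Matrix (Fin n) (Fin m) ℝ) :
    frob (u + w) ^ 2 = frob u ^ 2 + frob w ^ 2 + 2 * ∑ i, ∑ j, u i j * w i j := by
  simp only [frob_sq, Matrix.add_apply, add_sq, sum_add_distrib, mul_sum]
  ring_nf

theorem sum_mul_antisymm_mul_symm_eq_zero {ι κ : Type*} [Fintype ι] [Fintype κ]
    {L : Matrix ι ι ℝ} (hL : Lᵀ = -L) {A : Matrix κ κ ℝ} (hA : A.IsSymm)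
    (u : Matrix ι κ ℝ) : ∑ i, ∑ j, u i j * (L * u * A) i j = 0 := by
  have htrace : ∑ i, ∑ j, u i j * (L * u * A) i j = trace (uᵀ * (L * u * A)) := by
    rw [trace, sum_comm]
    simp only [diag_apply, mul_apply, transpose_apply]
  have hneg : trace (uᵀ * (L * u * A)) = -trace (uᵀ * (L * u * A)) := by
    conv_lhs => rw [← trace_transpose]
    rw [← trace_neg]
    simp only [transpose_mul, transpose_transpose, hL, hA.eq, Matrix.mul_neg, Matrix.neg_mul,
      Matrix.mul_assoc, trace_neg]
    rw [trace_mul_comm]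
    simp only [Matrix.mul_assoc]
  rw [htrace]
  linarith

theorem L2_transpose (n : ℕ) [NeZero n] (Δt Δx : ℝ) : (L2 n Δt Δx)ᵀ = -L2 n Δt Δx := by
  have hiff : ∀ a b : Fin n, a = b + 1 ↔ b = a - 1 := fun _ _ =>
    eq_comm.trans eq_sub_iff_add_eq.symm
  ext j k
  simp only [transpose_apply, Matrix.neg_apply, L2, of_apply, hiff j k, ← hiff k j]
  split_ifs <;> ring

theorem L2_mul_apply (n : ℕ) [NeZero n] (Δt Δx : ℝ) {m : ℕ} (w : Matrix (Fin n) (Fin m) ℝ)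
    (j : Fin n) (β : Fin m) :
    (L2 n Δt Δx * w) j β = Δt / (2 * Δx) * (w (j + 1) β - w (j - 1) β) := by
  simp only [mul_apply, L2, of_apply, add_mul, ite_mul, zero_mul, neg_mul, sum_add_distrib,
    sum_ite_eq', mem_univ, if_true]
  ring

theorem frob_L2_mul_sq_le (n : ℕ) [NeZero n] (Δt Δx : ℝ) {m : ℕ}
    (w : Matrix (Fin n) (Fin m) ℝ) :
    frob (L2 n Δt Δx * w) ^ 2 ≤ (Δt / Δx) ^ 2 * maxSinSq n * frob w ^ 2 := by
  calc frob (L2 n Δt Δx * w) ^ 2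
      = ∑ β, (Δt / (2 * Δx)) ^ 2 * ∑ j, (w (j + 1) β - w (j - 1) β) ^ 2 := by
        rw [frob_sq, sum_comm]
        simp only [L2_mul_apply, mul_pow, mul_sum]
    _ ≤ ∑ β, (Δt / (2 * Δx)) ^ 2 * (4 * maxSinSq n * ∑ j, w j β ^ 2) := by
        gcongr with β
        exact sum_sq_sub_le_maxSinSq n fun j => w j β
    _ = (Δt / Δx) ^ 2 * maxSinSq n * frob w ^ 2 := by
        rw [frob_sq, sum_comm, mul_sum]
        refine sum_congr rfl fun β _ => ?_
        ring

theorem sum_sq_mulVec_le {m : ℕ} (A : Matrix (Fin m) (Fin m) ℝ) (x : Fin m → ℝ) :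
    ∑ j, (A *ᵥ x) j ^ 2 ≤ specNorm A ^ 2 * ∑ j, x j ^ 2 := by
  have h := (toEuclideanCLM (𝕜 := ℝ) A).le_opNorm (WithLp.toLp 2 x)
  rw [toEuclideanCLM_toLp] at h
  have h2 := pow_le_pow_left₀ (norm_nonneg _) h 2
  simpa only [mul_pow, EuclideanSpace.real_norm_sq_eq, specNorm] using h2

theorem frob_mul_transpose_sq_le {n m : ℕ} (u : Matrix (Fin n) (Fin m) ℝ)
    (A : Matrix (Fin m) (Fin m) ℝ) : frob (u * Aᵀ) ^ 2 ≤ specNorm A ^ 2 * frob u ^ 2 := by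
  rw [frob_sq, frob_sq, mul_sum]
  simp only [mul_apply_eq_vecMul, vecMul_transpose]
  exact sum_le_sum fun i _ => sum_sq_mulVec_le A (u i)

theorem stmt9_general (n m : ℕ) [NeZero n] (Δt Δx : ℝ)
    (A : Matrix (Fin m) (Fin m) ℝ) (hA : A.IsSymm)
    (c : ℝ) (hc : c = specNorm A * Δt / Δx)
    (u : Matrix (Fin n) (Fin m) ℝ) :
    frob (u + L2 n Δt Δx * u * Aᵀ) ^ 2
        = frob u ^ 2 + frob (L2 n Δt Δx * u * Aᵀ) ^ 2 ∧
    frob (u + L2 n Δt Δx * u * Aᵀ) ^ 2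
      ≤ (1 + c ^ 2 * (Finset.Icc 1 n).sup'
            (Finset.nonempty_Icc.mpr (Nat.one_le_iff_ne_zero.mpr (NeZero.ne n)))
            (fun α : ℕ => Real.sin (2 * π * α / n) ^ 2))
        * frob u ^ 2 := by
  have hpyth : frob (u + L2 n Δt Δx * u * Aᵀ) ^ 2
      = frob u ^ 2 + frob (L2 n Δt Δx * u * Aᵀ) ^ 2 := by
    rw [frob_add_sq, sum_mul_antisymm_mul_symm_eq_zero (L2_transpose n Δt Δx) hA.transpose u]
    ring
  have hstep : frob (L2 n Δt Δx * u * Aᵀ) ^ 2 ≤ c ^ 2 * maxSinSq n * frob u ^ 2 :=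
    calc frob (L2 n Δt Δx * u * Aᵀ) ^ 2
        ≤ (Δt / Δx) ^ 2 * maxSinSq n * frob (u * Aᵀ) ^ 2 := by
          rw [Matrix.mul_assoc]
          exact frob_L2_mul_sq_le n Δt Δx _
      _ ≤ (Δt / Δx) ^ 2 * maxSinSq n * (specNorm A ^ 2 * frob u ^ 2) := by
          have := maxSinSq_nonneg n
          gcongr
          exact frob_mul_transpose_sq_le u A
      _ = c ^ 2 * maxSinSq n * frob u ^ 2 := by
          rw [hc]
          ring
  refine ⟨hpyth, ?_⟩
  change _ ≤ (1 + c ^ 2 * maxSinSq n) * _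
  linarith

theorem stmt9 (n m : ℕ) [NeZero n] (Δt Δx : ℝ) (hΔt : 0 < Δt) (hΔx : 0 < Δx)
    (A : Matrix (Fin m) (Fin m) ℝ) (hA : A.IsSymm)
    (c : ℝ) (hc : c = specNorm A * Δt / Δx)
    (u : Matrix (Fin n) (Fin m) ℝ) :
    frob (u + L2 n Δt Δx * u * Aᵀ) ^ 2
        = frob u ^ 2 + frob (L2 n Δt Δx * u * Aᵀ) ^ 2 ∧
    frob (u + L2 n Δt Δx * u * Aᵀ) ^ 2
      ≤ (1 + c ^ 2 * (Finset.Icc 1 n).sup'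
            (Finset.nonempty_Icc.mpr (Nat.one_le_iff_ne_zero.mpr (NeZero.ne n)))
            (fun α : ℕ => Real.sin (2 * π * α / n) ^ 2))
        * frob u ^ 2 :=
  stmt9_general n m Δt Δx A hA c hc u
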